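/- arXiv:2108.10338 — 2 statements merged into one kernel-verified Lean document; each statement's English description precedes it below -/
import Mathlib

section
/- Let M be a ℤ-graded, bounded below module over the Weyl algebra A₁ = ℚ[t,∂] (with ∂t - t∂ = 1, ∂ of degree +1 and t of degree -1), and let V ⊂ M be a graded subspace with M = V ⊕ ∂(M). Then M = ⊕_{n ≥ 0} ∂^n(V); in particular M is a free ℚ[∂]-module. -/
/-!
Since `M` is bounded below and `T` lowers degrees, every homogeneous vector is killed by a power
of `T`; as `[D, T^(k+1)] = (k+1) T^k`, this makes `D` injective. Then `M = V ⊕ D M` gives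
`D^n M = D^n V ⊕ D^(n+1) M`, which yields the independence of the `D^n V`, and they span `M` by a
graded Nakayama argument: `M_d ⊆ V_d + D M_(d-1)`.
-/

open DirectSum

section WeylRelation

variable {A : Type*} [Ring A]

theorem mul_pow_succ_sub_pow_succ_mul {d t : A} (h : d * t - t * d = 1) (n : ℕ) :
    d * t ^ (n + 1) - t ^ (n + 1) * d = (n + 1) • t ^ n := by
  induction n with
  | zero => simpa using h
  | succ n ih =>
    calc d * t ^ (n + 2) - t ^ (n + 2) * d
        = (d * t ^ (n + 1) - t ^ (n + 1) * d) * t + t ^ (n + 1) * (d * t - t * d) := by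
          rw [pow_succ t (n + 1)]; noncomm_ring
      _ = (n + 2) • t ^ (n + 1) := by
          rw [ih, h, smul_mul_assoc, ← pow_succ, mul_one, ← succ_nsmul]

variable {R M : Type*} [Ring R] [AddCommGroup M] [Module R M] [IsAddTorsionFree M]

/-- `(k+1) • T^k m = [D, T^(k+1)] m = 0`, so torsion-freeness lowers the nilpotency order. -/
theorem Module.End.eq_zero_of_pow_apply_eq_zero {D T : Module.End R M}
    (hcomm : D * T - T * D = 1) {m : M} (hD : D m = 0) {k : ℕ} (hT : (T ^ k) m = 0) :
    m = 0 := by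
  induction k with
  | zero => simpa using hT
  | succ k ih =>
    refine ih ((nsmul_eq_zero_iff_right k.succ_ne_zero).mp ?_)
    have := congr($(mul_pow_succ_sub_pow_succ_mul hcomm k) m)
    simp only [LinearMap.sub_apply, Module.End.mul_apply, LinearMap.smul_apply, hD, hT,
      map_zero, sub_zero] at this
    exact this.symm

end WeylRelation

section Graded

variable {R M : Type*} [Ring R] [AddCommGroup M] [Module R M] (ℳ : ℤ → Submodule R M)

theorem pow_apply_mem_of_map_le {T : Module.End R M} (hT : ∀ n, (ℳ n).map T ≤ ℳ (n - 1))
    (k : ℕ) {n : ℤ} {x : M} (hx : x ∈ ℳ n) : (T ^ k) x ∈ ℳ (n - k) := by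
  induction k generalizing n x with
  | zero => simpa using hx
  | succ k ih =>
    have := ih (hT n ⟨x, hx, rfl⟩)
    rwa [pow_succ, Module.End.mul_apply, Nat.cast_succ, add_comm, ← sub_sub]

variable {ℳ} in
theorem exists_pow_apply_eq_zero_of_mem {n₀ : ℤ} (hbdd : ∀ n < n₀, ℳ n = ⊥)
    {T : Module.End R M} (hT : ∀ n, (ℳ n).map T ≤ ℳ (n - 1)) {d : ℤ} {x : M}
    (hx : x ∈ ℳ d) :
    ∃ k : ℕ, (T ^ k) x = 0 := by
  refine ⟨(d - n₀ + 1).toNat, ?_⟩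
  have := pow_apply_mem_of_map_le ℳ hT (d - n₀ + 1).toNat hx
  rwa [hbdd _ (by omega), Submodule.mem_bot] at this

variable [Decomposition ℳ]

theorem decompose_apply_add_of_map_le {f : Module.End R M} {c : ℤ}
    (hf : ∀ n, (ℳ n).map f ≤ ℳ (n + c)) (x : M) (d : ℤ) :
    (decompose ℳ (f x) (d + c) : M) = f (decompose ℳ x d) := by
  induction x using Decomposition.inductionOn ℳ with
  | zero => simp
  | @homogeneous i m =>
    have hfm : f m ∈ ℳ (i + c) := hf i ⟨m, m.2, rfl⟩
    obtain rfl | hid := eq_or_ne i d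
    · rw [decompose_of_mem_same ℳ hfm, decompose_of_mem_same ℳ m.2]
    · rw [decompose_of_mem_ne ℳ hfm (by omega), decompose_of_mem_ne ℳ m.2 hid, map_zero]
  | add x y hx hy =>
    simp only [map_add, decompose_add, DirectSum.add_apply, Submodule.coe_add, hx, hy]

theorem isHomogeneous_of_eq_iSup_inf {W : Submodule R M} (hW : W = ⨆ n, W ⊓ ℳ n) :
    SetLike.IsHomogeneous ℳ W := by
  intro d x hx
  rw [hW] at hx
  induction hx using Submodule.iSup_induction' with
  | mem n y hy =>
    obtain rfl | hnd := eq_or_ne n d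
    · rw [decompose_of_mem_same ℳ hy.2]; exact hy.1
    · rw [decompose_of_mem_ne ℳ hy.2 hnd]; exact W.zero_mem
  | zero => simp
  | add y z _ _ hy hz =>
    rw [decompose_add, DirectSum.add_apply, Submodule.coe_add]
    exact W.add_mem hy hz

variable {ℳ}

theorem injective_of_mul_sub_mul_eq_one [IsAddTorsionFree M] {n₀ : ℤ}
    (hbdd : ∀ n < n₀, ℳ n = ⊥) {D T : Module.End R M}
    (hD : ∀ n, (ℳ n).map D ≤ ℳ (n + 1)) (hT : ∀ n, (ℳ n).map T ≤ ℳ (n - 1))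
    (hcomm : D * T - T * D = 1) : Function.Injective D := by
  refine (injective_iff_map_eq_zero D).mpr fun m hm => (decompose ℳ).injective ?_
  ext d
  have hDd : D (decompose ℳ m d) = 0 := by
    rw [← decompose_apply_add_of_map_le ℳ hD, hm, decompose_zero, DirectSum.zero_apply,
      ZeroMemClass.coe_zero]
  obtain ⟨k, hk⟩ := exists_pow_apply_eq_zero_of_mem hbdd hT (decompose ℳ m d).2
  simp [Module.End.eq_zero_of_pow_apply_eq_zero hcomm hDd hk]

/-- Graded Nakayama, by induction on the degree from the bottom: the degree-`d + 1` component of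
`w + D x` is `w_(d+1) + D x_d`. -/
theorem le_of_sup_range_eq_top {n₀ : ℤ} (hbdd : ∀ n < n₀, ℳ n = ⊥) {D : Module.End R M}
    (hD : ∀ n, (ℳ n).map D ≤ ℳ (n + 1))
    {W S : Submodule R M} (hW : SetLike.IsHomogeneous ℳ W) (hWS : W ≤ S) (hDS : S.map D ≤ S)
    (hsup : W ⊔ LinearMap.range D = ⊤) (d : ℤ) : ℳ d ≤ S := by
  obtain hd | hd := lt_or_ge d (n₀ - 1)
  · simp [hbdd d (by omega)]
  induction d, hd using Int.leInduction with
  | base => simp [hbdd (n₀ - 1) (by omega)]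
  | succ d _ ih =>
    intro m hm
    have hm' : m ∈ W ⊔ LinearMap.range D := hsup ▸ Submodule.mem_top
    obtain ⟨w, hw, _, ⟨x, rfl⟩, rfl⟩ := Submodule.mem_sup.mp hm'
    rw [← decompose_of_mem_same ℳ hm, decompose_add, DirectSum.add_apply, Submodule.coe_add,
      decompose_apply_add_of_map_le ℳ hD]
    exact S.add_mem (hWS (hW _ hw)) (hDS ⟨_, ih (decompose ℳ x d).2, rfl⟩)

end Graded

section Filtration

variable {R M : Type*} [Ring R] [AddCommGroup M] [Module R M]

theorem iSupIndep_of_le_of_disjoint_succ {p F : ℕ → Submodule R M} (hF : Antitone F)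
    (hpF : ∀ n, p n ≤ F n) (hdisj : ∀ n, Disjoint (p n) (F (n + 1))) : iSupIndep p := by
  classical
  rw [iSupIndep_iff_finsetSum_eq_zero_imp_eq_zero]
  intro s
  induction s using Finset.induction_on_min with
  | empty => simp
  | insert a s has ih =>
    intro v hv hsum
    have hs : ∑ i ∈ s, v i ∈ F (a + 1) :=
      Submodule.sum_mem _ fun i hi => hF (has i hi) (hpF i (hv i (by simp [hi])))
    rw [Finset.sum_insert (fun ha => (has a ha).false)] at hsum
    have hva : v a = 0 := Submodule.disjoint_def.mp (hdisj a) _ (hv a (by simp))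
      (by rw [eq_neg_of_add_eq_zero_left hsum]; exact neg_mem hs)
    rw [hva, zero_add] at hsum
    intro i hi
    obtain rfl | hi := Finset.mem_insert.mp hi
    · exact hva
    · exact ih v (fun j hj => hv j (by simp [hj])) hsum i hi

theorem Module.End.iSupIndep_map_pow {D : Module.End R M} (hD : Function.Injective D)
    {W : Submodule R M} (hW : Disjoint W (LinearMap.range D)) :
    iSupIndep fun n : ℕ => W.map (D ^ n) := by
  refine iSupIndep_of_le_of_disjoint_succ (F := fun n => LinearMap.range (D ^ n))
    (antitone_nat_of_succ_le fun n => ?_) (fun n => LinearMap.map_le_range) fun n => ?_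
  · rw [pow_succ, Module.End.mul_eq_comp]
    exact LinearMap.range_comp_le_range _ _
  · rw [pow_succ, Module.End.mul_eq_comp, LinearMap.range_comp]
    exact Submodule.disjoint_map (by rw [Module.End.coe_pow]; exact hD.iterate n) hW

end Filtration

/-- A bounded-below ℤ-graded module over the Weyl algebra (with `D` of degree `+1`, `t` of
degree `-1`, `D t - t D = 1`) is the internal direct sum `⊕_{n ≥ 0} D^n(V')` for any graded
complement `V'` of the image of `D`. -/
theorem stmt_3 {V : Type*} [AddCommGroup V] [Module ℚ V]
    (ℳ : ℤ → Submodule ℚ V) (hdecomp : DirectSum.IsInternal ℳ)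
    (n₀ : ℤ) (hbdd : ∀ n < n₀, ℳ n = ⊥)
    (D T : Module.End ℚ V)
    (hD : ∀ n, (ℳ n).map D ≤ ℳ (n + 1))
    (hT : ∀ n, (ℳ n).map T ≤ ℳ (n - 1))
    (hcomm : D * T - T * D = 1)
    (V' : Submodule ℚ V)
    (hgraded : V' = ⨆ n : ℤ, V' ⊓ ℳ n)
    (hcompl : IsCompl V' (LinearMap.range D)) :
    DirectSum.IsInternal (fun n : ℕ => V'.map (D ^ n)) := by
  let := hdecomp.chooseDecomposition
  have := IsAddTorsionFree.of_module_rat (M := V)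
  have hDinj := injective_of_mul_sub_mul_eq_one hbdd hD hT hcomm
  refine isInternal_submodule_of_iSupIndep_of_iSup_eq_top
    (Module.End.iSupIndep_map_pow hDinj hcompl.disjoint) ?_
  set S := ⨆ n : ℕ, V'.map (D ^ n)
  have hV'S : V' ≤ S := by
    simpa [Module.End.one_eq_id] using le_iSup (fun n : ℕ => V'.map (D ^ n)) 0
  have hDS : S.map D ≤ S := by
    rw [Submodule.map_iSup]
    refine iSup_le fun n => ?_
    rw [← Submodule.map_comp, ← Module.End.mul_eq_comp, ← pow_succ']
    exact le_iSup (fun n : ℕ => V'.map (D ^ n)) (n + 1)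
  rw [eq_top_iff, ← hdecomp.submodule_iSup_eq_top]
  exact iSup_le <| le_of_sup_range_eq_top hbdd hD (isHomogeneous_of_eq_iSup_inf ℳ hgraded)
    hV'S hDS hcompl.sup_eq_top
end

section
/- Let L = ℤ^I with a symmetric bilinear form χ, and define the shuffle product on ⊕_{d ∈ ℕ^I} Λ_d (with Λ_d the Σ_d-symmetric polynomials in variables x_{i,k}, i ∈ I, 1 ≤ k ≤ d_i) by (f*g)(x) = ∑_{σ ∈ Sh(d,e)} σ(f·g·K) where K(x,y) = ∏_{i,j∈I} ∏_{k=1}^{d_i} ∏_{l=1}^{e_j} (y_{j,l} − x_{i,k})^{−χ(e_i,e_j)}. Then f*g = (−1)^{χ(d,e)} g*f for f ∈ Λ_d, g ∈ Λ_e. -/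
/-!
Let `ρ` swap, at every vertex `i`, the block of the first `d i` positions with that of the last
`e i` ones. Then `τ ↦ τ * ρ` maps the `(e,d)`-shuffles bijectively onto the `(d,e)`-shuffles, and
the `(d,e)`-summand at `τ * ρ` is the `(e,d)`-summand at `τ` with `K(y,x)` replaced by `K(x,y)`.
Since `χ` is symmetric, the two kernels have the same factors with negated bases, so
`K(x,y) = (-1)^{χ(d,e)} K(y,x)`.
-/

open MvPolynomial Finset

theorem zpow_sum₀ {G₀ ι : Type*} [CommGroupWithZero G₀] {a : G₀} (ha : a ≠ 0) (s : Finset ι)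
    (n : ι → ℤ) : a ^ (∑ i ∈ s, n i) = ∏ i ∈ s, a ^ n i := by
  classical
  induction s using Finset.induction_on with
  | empty => simp
  | insert i s hi ih => rw [sum_insert hi, prod_insert hi, zpow_add₀ ha, ih]

theorem neg_one_zpow_neg {F : Type*} [DivisionRing F] (n : ℤ) : (-1 : F) ^ (-n) = (-1) ^ n := by
  rw [zpow_neg, ← inv_zpow, inv_neg_one]

theorem sub_zpow_eq_neg_one_zpow_mul {F : Type*} [Field F] (a b : F) (n : ℤ) :
    (b - a) ^ n = (-1) ^ n * (a - b) ^ n := by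
  rw [← neg_sub a, neg_eq_neg_one_mul, mul_zpow]

def finBlockSwap (m n : ℕ) : Equiv.Perm (Fin (m + n)) :=
  finAddFlip.trans (finCongr (Nat.add_comm n m))

@[simp]
theorem finBlockSwap_castAdd (m n : ℕ) (k : Fin m) :
    finBlockSwap m n (Fin.castAdd n k) = Fin.cast (Nat.add_comm n m) (Fin.natAdd n k) := by
  simp [finBlockSwap]

@[simp]
theorem finBlockSwap_natAdd (m n : ℕ) (l : Fin n) :
    finBlockSwap m n (Fin.natAdd m l) = Fin.cast (Nat.add_comm n m) (Fin.castAdd m l) := by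
  simp [finBlockSwap]

section ShuffleKernel

variable {F I : Type*} [Field F] [Fintype I] {α β : I → Type*} [∀ i, Fintype (α i)]
  [∀ i, Fintype (β i)]

def shuffleKernel (χ : I → I → ℤ) (x : (i : I) → α i → F) (y : (j : I) → β j → F) : F :=
  ∏ i, ∏ j, ∏ k : α i, ∏ l : β j, (y j l - x i k) ^ (-χ i j)

theorem prod_neg_one_zpow_eq_neg_one_zpow_sum (χ : I → I → ℤ) :
    ∏ i, ∏ j, ∏ _k : α i, ∏ _l : β j, (-1 : F) ^ (-χ i j) =
      (-1) ^ (∑ i, ∑ j, χ i j * Fintype.card (α i) * Fintype.card (β j)) := by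
  rw [zpow_sum₀ (by norm_num)]
  refine prod_congr rfl fun i _ => ?_
  rw [zpow_sum₀ (by norm_num)]
  refine prod_congr rfl fun j _ => ?_
  simp only [prod_const, card_univ, ← zpow_natCast, ← zpow_mul]
  rw [← neg_one_zpow_neg]
  ring_nf

theorem shuffleKernel_swap {χ : I → I → ℤ} (hχ : ∀ i j, χ i j = χ j i)
    (x : (i : I) → α i → F) (y : (j : I) → β j → F) :
    shuffleKernel χ x y =
      (-1) ^ (∑ i, ∑ j, χ i j * Fintype.card (α i) * Fintype.card (β j)) * shuffleKernel χ y x := by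
  have hswap : ∏ i, ∏ j, ∏ k : α i, ∏ l : β j, (x i k - y j l) ^ (-χ i j) = shuffleKernel χ y x := by
    rw [prod_comm]
    refine prod_congr rfl fun j _ => prod_congr rfl fun i _ => ?_
    rw [prod_comm, hχ]
  rw [← hswap, shuffleKernel]
  simp only [sub_zpow_eq_neg_one_zpow_mul (x _ _), prod_mul_distrib, prod_neg_one_zpow_eq_neg_one_zpow_sum]

theorem map_shuffleKernel {G H : Type*} [Field G] [FunLike H F G] [RingHomClass H F G] (φ : H)
    (χ : I → I → ℤ) (x : (i : I) → α i → F) (y : (j : I) → β j → F) :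
    φ (shuffleKernel χ x y) = shuffleKernel χ (fun i => φ ∘ x i) (fun j => φ ∘ y j) := by
  simp only [shuffleKernel, map_prod, map_zpow₀, map_sub, Function.comp_apply]

end ShuffleKernel

theorem stmt_7_general {I : Type} [Fintype I] [DecidableEq I]
    (χ : I → I → ℤ) (hχ : ∀ i j, χ i j = χ j i) (d e : I → ℕ)
    (f : MvPolynomial ((i : I) × Fin (d i)) ℚ)
    (g : MvPolynomial ((i : I) × Fin (e i)) ℚ) :
    -- the ambient field of rational functions in the variables `x_{i,k}`, `k < d i + e i`
    let V := (i : I) × Fin (d i + e i)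
    let R := MvPolynomial V ℚ
    let F := FractionRing R
    let ι : R →+* F := algebraMap R F
    -- the action of block permutations on rational functions
    let act : ((i : I) → Equiv.Perm (Fin (d i + e i))) → F ≃+* F := fun σ =>
      IsFractionRing.ringEquivOfRingEquiv
        ((renameEquiv ℚ (Equiv.sigmaCongrRight σ)).toRingEquiv)
    -- positions of the `d`-block followed by the `e`-block, and of the `e`-block followed by
    -- the `d`-block, inside `Fin (d i + e i)`
    let posDL : (i : I) → Fin (d i) → Fin (d i + e i) := fun i k => Fin.castAdd (e i) k
    let posER : (i : I) → Fin (e i) → Fin (d i + e i) := fun i l => Fin.natAdd (d i) l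
    let posEL : (i : I) → Fin (e i) → Fin (d i + e i) := fun i l =>
      Fin.cast (Nat.add_comm (e i) (d i)) (Fin.castAdd (d i) l)
    let posDR : (i : I) → Fin (d i) → Fin (d i + e i) := fun i k =>
      Fin.cast (Nat.add_comm (e i) (d i)) (Fin.natAdd (e i) k)
    -- the two kernels
    let K₁ : F := ∏ i : I, ∏ j : I, ∏ k : Fin (d i), ∏ l : Fin (e j),
      (ι (X ⟨j, posER j l⟩) - ι (X ⟨i, posDL i k⟩)) ^ (-(χ i j))
    let K₂ : F := ∏ i : I, ∏ j : I, ∏ k : Fin (e i), ∏ l : Fin (d j),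
      (ι (X ⟨j, posDR j l⟩) - ι (X ⟨i, posEL i k⟩)) ^ (-(χ i j))
    -- `f` and `g` placed on the respective blocks of variables
    let fV : F := ι (rename (fun p : (i : I) × Fin (d i) => (⟨p.1, posDL p.1 p.2⟩ : V)) f)
    let gV : F := ι (rename (fun p : (i : I) × Fin (e i) => (⟨p.1, posER p.1 p.2⟩ : V)) g)
    let gV' : F := ι (rename (fun p : (i : I) × Fin (e i) => (⟨p.1, posEL p.1 p.2⟩ : V)) g)
    let fV' : F := ι (rename (fun p : (i : I) × Fin (d i) => (⟨p.1, posDR p.1 p.2⟩ : V)) f)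
    -- the sets of `(d,e)`-shuffles and `(e,d)`-shuffles
    let Sh₁ : Finset ((i : I) → Equiv.Perm (Fin (d i + e i))) :=
      Finset.univ.filter (fun σ => ∀ i,
        (∀ k k' : Fin (d i), k < k' → σ i (posDL i k) < σ i (posDL i k')) ∧
        (∀ l l' : Fin (e i), l < l' → σ i (posER i l) < σ i (posER i l')))
    let Sh₂ : Finset ((i : I) → Equiv.Perm (Fin (d i + e i))) :=
      Finset.univ.filter (fun σ => ∀ i,
        (∀ l l' : Fin (e i), l < l' → σ i (posEL i l) < σ i (posEL i l')) ∧
        (∀ k k' : Fin (d i), k < k' → σ i (posDR i k) < σ i (posDR i k')))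
    -- supercommutativity `f * g = (−1)^{χ(d,e)} g * f`
    (∑ σ ∈ Sh₁, act σ (fV * gV * K₁)) =
      (-1 : F) ^ (∑ i : I, ∑ j : I, χ i j * (d i : ℤ) * (e j : ℤ)) *
        ∑ σ ∈ Sh₂, act σ (gV' * fV' * K₂) := by
  intro V R F ι act posDL posER posEL posDR K₁ K₂ fV gV gV' fV' Sh₁ Sh₂
  set c : ℤ := ∑ i : I, ∑ j : I, χ i j * (d i : ℤ) * (e j : ℤ)
  let ρ : (i : I) → Equiv.Perm (Fin (d i + e i)) := fun i => finBlockSwap (d i) (e i)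
  have hact : ∀ σ p, act σ (ι p) = ι (rename (Equiv.sigmaCongrRight σ) p) := fun σ p =>
    IsFractionRing.ringEquivOfRingEquiv_algebraMap _ p
  have hact_rename : ∀ σ σ' {W : Type} (φ φ' : W → V) (p : MvPolynomial W ℚ),
      Equiv.sigmaCongrRight σ ∘ φ = Equiv.sigmaCongrRight σ' ∘ φ' →
        act σ (ι (rename φ p)) = act σ' (ι (rename φ' p)) := by
    intro σ σ' W φ φ' p h
    rw [hact, hact, rename_rename, rename_rename, h]
  have hmem : ∀ τ, τ ∈ Sh₂ ↔ τ * ρ ∈ Sh₁ := by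
    intro τ
    simp only [Sh₁, Sh₂, Finset.mem_filter, Finset.mem_univ, true_and, Pi.mul_apply,
      Equiv.Perm.mul_apply, ρ, posDL, posER, finBlockSwap_castAdd, finBlockSwap_natAdd]
    exact forall_congr' fun _ => and_comm
  have hsummand : ∀ τ, act (τ * ρ) (fV * gV * K₁) = (-1) ^ c * act τ (gV' * fV' * K₂) := by
    intro τ
    have hK : act (τ * ρ) K₁ = (-1) ^ c * act τ K₂ := by
      change act (τ * ρ) (shuffleKernel χ (fun i k => ι (X ⟨i, posDL i k⟩))
          (fun j l => ι (X ⟨j, posER j l⟩))) =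
        (-1) ^ c * act τ (shuffleKernel χ (fun i k => ι (X ⟨i, posEL i k⟩))
          (fun j l => ι (X ⟨j, posDR j l⟩)))
      simp only [map_shuffleKernel, Function.comp_def, hact, rename_X, Equiv.sigmaCongrRight_apply,
        Pi.mul_apply, Equiv.Perm.mul_apply, ρ, posDL, posER, finBlockSwap_castAdd,
        finBlockSwap_natAdd]
      rw [shuffleKernel_swap hχ]
      simp only [Fintype.card_fin, c, posEL, posDR]
    have hf : act (τ * ρ) fV = act τ fV' :=
      hact_rename _ _ _ _ f (by ext1 p; simp [ρ, posDL, posDR])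
    have hg : act (τ * ρ) gV = act τ gV' :=
      hact_rename _ _ _ _ g (by ext1 p; simp [ρ, posER, posEL])
    rw [map_mul, map_mul, hK, hf, hg, map_mul, map_mul]
    ring
  rw [Finset.mul_sum]
  exact (Finset.sum_equiv (Equiv.mulRight ρ) hmem fun τ _ => (hsummand τ).symm).symm

/-- Supercommutativity of the shuffle product of the CoHA of a symmetric quiver:
`f * g = (−1)^{χ(d,e)} g * f` for `f ∈ Λ_d`, `g ∈ Λ_e`, where the shuffle product is computed
in the fraction field of the polynomial ring on the variables `x_{i,k}`, `i ∈ I`,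
`1 ≤ k ≤ d_i + e_i`, with kernel `K(x,y) = ∏ (y_{j,l} − x_{i,k})^{−χ(i,j)}`. -/
theorem stmt_7 {I : Type} [Fintype I] [DecidableEq I]
    (χ : I → I → ℤ) (hχ : ∀ i j, χ i j = χ j i) (d e : I → ℕ)
    (f : MvPolynomial ((i : I) × Fin (d i)) ℚ)
    (g : MvPolynomial ((i : I) × Fin (e i)) ℚ)
    (hf : ∀ σ : (i : I) → Equiv.Perm (Fin (d i)),
      rename (fun p : (i : I) × Fin (d i) =>
        (⟨p.1, σ p.1 p.2⟩ : (i : I) × Fin (d i))) f = f)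
    (hg : ∀ σ : (i : I) → Equiv.Perm (Fin (e i)),
      rename (fun p : (i : I) × Fin (e i) =>
        (⟨p.1, σ p.1 p.2⟩ : (i : I) × Fin (e i))) g = g) :
    -- the ambient field of rational functions in the variables `x_{i,k}`, `k < d i + e i`
    let V := (i : I) × Fin (d i + e i)
    let R := MvPolynomial V ℚ
    let F := FractionRing R
    let ι : R →+* F := algebraMap R F
    -- the action of block permutations on rational functions
    let act : ((i : I) → Equiv.Perm (Fin (d i + e i))) → F ≃+* F := fun σ =>
      IsFractionRing.ringEquivOfRingEquiv
        ((renameEquiv ℚ (Equiv.sigmaCongrRight σ)).toRingEquiv)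
    -- positions of the `d`-block followed by the `e`-block, and of the `e`-block followed by
    -- the `d`-block, inside `Fin (d i + e i)`
    let posDL : (i : I) → Fin (d i) → Fin (d i + e i) := fun i k => Fin.castAdd (e i) k
    let posER : (i : I) → Fin (e i) → Fin (d i + e i) := fun i l => Fin.natAdd (d i) l
    let posEL : (i : I) → Fin (e i) → Fin (d i + e i) := fun i l =>
      Fin.cast (Nat.add_comm (e i) (d i)) (Fin.castAdd (d i) l)
    let posDR : (i : I) → Fin (d i) → Fin (d i + e i) := fun i k =>
      Fin.cast (Nat.add_comm (e i) (d i)) (Fin.natAdd (e i) k)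
    -- the two kernels
    let K₁ : F := ∏ i : I, ∏ j : I, ∏ k : Fin (d i), ∏ l : Fin (e j),
      (ι (X ⟨j, posER j l⟩) - ι (X ⟨i, posDL i k⟩)) ^ (-(χ i j))
    let K₂ : F := ∏ i : I, ∏ j : I, ∏ k : Fin (e i), ∏ l : Fin (d j),
      (ι (X ⟨j, posDR j l⟩) - ι (X ⟨i, posEL i k⟩)) ^ (-(χ i j))
    -- `f` and `g` placed on the respective blocks of variables
    let fV : F := ι (rename (fun p : (i : I) × Fin (d i) => (⟨p.1, posDL p.1 p.2⟩ : V)) f)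
    let gV : F := ι (rename (fun p : (i : I) × Fin (e i) => (⟨p.1, posER p.1 p.2⟩ : V)) g)
    let gV' : F := ι (rename (fun p : (i : I) × Fin (e i) => (⟨p.1, posEL p.1 p.2⟩ : V)) g)
    let fV' : F := ι (rename (fun p : (i : I) × Fin (d i) => (⟨p.1, posDR p.1 p.2⟩ : V)) f)
    -- the sets of `(d,e)`-shuffles and `(e,d)`-shuffles
    let Sh₁ : Finset ((i : I) → Equiv.Perm (Fin (d i + e i))) :=
      Finset.univ.filter (fun σ => ∀ i,
        (∀ k k' : Fin (d i), k < k' → σ i (posDL i k) < σ i (posDL i k')) ∧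
        (∀ l l' : Fin (e i), l < l' → σ i (posER i l) < σ i (posER i l')))
    let Sh₂ : Finset ((i : I) → Equiv.Perm (Fin (d i + e i))) :=
      Finset.univ.filter (fun σ => ∀ i,
        (∀ l l' : Fin (e i), l < l' → σ i (posEL i l) < σ i (posEL i l')) ∧
        (∀ k k' : Fin (d i), k < k' → σ i (posDR i k) < σ i (posDR i k')))
    -- supercommutativity `f * g = (−1)^{χ(d,e)} g * f`
    (∑ σ ∈ Sh₁, act σ (fV * gV * K₁)) =
      (-1 : F) ^ (∑ i : I, ∑ j : I, χ i j * (d i : ℤ) * (e j : ℤ)) *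
        ∑ σ ∈ Sh₂, act σ (gV' * fV' * K₂) :=
  stmt_7_general χ hχ d e f g
end
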